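/- arXiv:2106.00631 — 3 statements merged into one kernel-verified Lean document; each statement's English description precedes it below -/
import Mathlib

section
/- For an automorphism σ of a d-ary rooted tree T the following are equivalent: (1) σ is strongly settled; (2) for every x ∈ ∂T the closure of the σ-orbit of x is clopen; (3) the action of ⟨σ⟩ on ∂T has only finitely many minimal components. -/
/-- The boundary of the spherically homogeneous rooted tree with spherical
index `m`: infinite paths are sequences `x` with `x n ∈ {0, …, m n - 1}`. -/
abbrev Bd (m : ℕ → ℕ) : Type := ∀ n : ℕ, Fin (m n)

/-- A permutation of the boundary is a tree automorphism iff it preserves the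
relation "agree on the first `N` coordinates" (i.e. it permutes each vertex
level preserving the tree structure). -/
def IsTreeAut {m : ℕ → ℕ} (e : Equiv.Perm (Bd m)) : Prop :=
  ∀ (N : ℕ) (x y : Bd m), (∀ n < N, x n = y n) ↔ (∀ n < N, e x n = e y n)

/-- The automorphism group of the spherically homogeneous rooted tree with
spherical index `m`, realized as a subgroup of the permutations of the
boundary. -/
def treeAutGroup (m : ℕ → ℕ) : Subgroup (Equiv.Perm (Bd m)) where
  carrier := {e | IsTreeAut e}
  one_mem' := fun _ _ _ => Iff.rfl
  mul_mem' := by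
    intro a b ha hb N x y
    exact (hb N x y).trans (ha N (b x) (b y))
  inv_mem' := by
    intro a ha N x y
    have h := ha N (a⁻¹ x) (a⁻¹ y)
    simpa [Equiv.Perm.inv_def, Equiv.apply_symm_apply] using h.symm

/-- The orbit of `x` under the cyclic group generated by `a`. -/
def orbitZ {m : ℕ → ℕ} (a : Equiv.Perm (Bd m)) (x : Bd m) : Set (Bd m) :=
  {y | ∃ k : ℤ, (a ^ k) x = y}

/-- `a` acts transitively on every vertex level `V n` (vertices at level `n`
are identified with length-`n` prefixes of boundary points). -/
def LevelTransitive {m : ℕ → ℕ} (a : Equiv.Perm (Bd m)) : Prop :=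
  ∀ (n : ℕ) (x y : Bd m), ∃ k : ℤ, ∀ i < n, ((a ^ k) x) i = y i

/-- `f` belongs to the closure of the set `Γ` of tree automorphisms in the
profinite (= uniform) topology on `Aut(T)`: for every level `n` there is an
element of `Γ` agreeing with `f` up to level `n` everywhere. -/
def InClosure {m : ℕ → ℕ} (Γ : Set (Equiv.Perm (Bd m))) (f : Bd m → Bd m) : Prop :=
  ∀ n : ℕ, ∃ g ∈ Γ, ∀ x : Bd m, ∀ i < n, f x i = g x i

variable {d : ℕ}

/-- The vertex `v` (identified with any boundary point passing through it)
lies in a cycle of length `k` of the restriction of `σ` to the level-`n`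
vertices of the `d`-ary tree. -/
def InCycle (σ : Equiv.Perm (Bd (fun _ => d))) (n k : ℕ) (v : Bd (fun _ => d)) : Prop :=
  0 < k ∧ (∀ i < n, ((σ ^ k) v) i = v i) ∧
    ∀ j, 0 < j → j < k → ¬ (∀ i < n, ((σ ^ j) v) i = v i)

/-- `x` passes through a level-`n` vertex lying above the cycle of the
level-`n` vertex of `v`. -/
def AboveCycle (σ : Equiv.Perm (Bd (fun _ => d))) (n : ℕ) (v x : Bd (fun _ => d)) : Prop :=
  ∃ j : ℕ, ∀ i < n, x i = ((σ ^ j) v) i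

/-- The vertex of `v` at level `n` lies in a *stable* cycle of length `k` of
`σ`: it lies in a cycle of length `k`, and for every level `m > n` all the
vertices of level `m` lying above this cycle are in one single cycle of the
restriction of `σ` to level `m` (necessarily of length `d^(m-n) * k`). -/
def InStableCycle (σ : Equiv.Perm (Bd (fun _ => d))) (n k : ℕ) (v : Bd (fun _ => d)) : Prop :=
  InCycle σ n k v ∧
    ∀ mlev, n < mlev → ∀ x y : Bd (fun _ => d), AboveCycle σ n v x → AboveCycle σ n v y →
      ∃ t : ℕ, ∀ i < mlev, ((σ ^ t) x) i = y i

/-- A level-`n` vertex `w` of the `d`-ary tree is in a stable cycle of `σ`. -/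
def StableVertex (σ : Equiv.Perm (Bd (fun _ => d))) (n : ℕ) (w : Fin n → Fin d) : Prop :=
  ∃ v : Bd (fun _ => d), (∀ i : Fin n, v (i : ℕ) = w i) ∧ ∃ k : ℕ, InStableCycle σ n k v

/-- `σ` is settled: the proportion of level-`n` vertices lying in stable
cycles of `σ` tends to `1` as `n → ∞`. -/
def SettledAut (σ : Equiv.Perm (Bd (fun _ => d))) : Prop :=
  Filter.Tendsto
    (fun n : ℕ => (Nat.card {w : Fin n → Fin d // StableVertex σ n w} : ℝ) /
      (Fintype.card (Fin n → Fin d) : ℝ))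
    Filter.atTop (nhds 1)

/-- `σ` is strongly settled: from some level `n ≥ 1` on, every vertex lies in
a stable cycle of `σ`. -/
def StronglySettledAut (σ : Equiv.Perm (Bd (fun _ => d))) : Prop :=
  ∃ n : ℕ, 0 < n ∧ ∀ w : Fin n → Fin d, StableVertex σ n w

/-- A minimal component of the dynamical system `(∂T, σ)`: a nonempty closed
`σ`-invariant set on which every `σ`-orbit is dense. -/
def IsMinimalComponent (σ : Equiv.Perm (Bd (fun _ => d))) (X : Set (Bd (fun _ => d))) : Prop :=
  X.Nonempty ∧ IsClosed X ∧ ⇑σ '' X = X ∧ ∀ x ∈ X, closure (orbitZ σ x) = X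

/-!
A tree automorphism acts on `∂T` by isometries for the ultrametric whose balls are the
cylinders, so the orbit closures of `σ` partition `∂T` and are exactly its minimal components;
moreover `y` lies in the orbit closure of `x` iff at every level some power of `σ` moves the
vertex of `x` to that of `y`. If every level-`n` vertex is in a stable cycle, the orbit closure
of `x` is the union of the level-`n` cylinders above the cycle of its vertex, hence clopen.
Clopen orbit closures cover the compact space `∂T`, so there are finitely many of them, and a
Lebesgue-number argument gives one level `N` with every level-`N` cylinder inside an orbit
closure, which makes every level-`N` cycle stable. Conversely, with finitely many orbit closures
the complement of each one is a finite union of closed sets.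
-/

open PiNat Set

section Cylinders

variable {m : ℕ → ℕ}

lemma isClopen_of_forall_cylinder_subset {S : Set (Bd m)} (n : ℕ)
    (hS : ∀ x ∈ S, cylinder x n ⊆ S) : IsClopen S := by
  have isOpen_of : ∀ T : Set (Bd m), (∀ x ∈ T, cylinder x n ⊆ T) → IsOpen T := fun T hT =>
    isOpen_iff_forall_mem_open.2 fun x hx =>
      ⟨cylinder x n, hT x hx, isOpen_cylinder _ x n, self_mem_cylinder x n⟩
  refine ⟨isOpen_compl_iff.1 (isOpen_of Sᶜ fun x hx y hy hyS => hx ?_), isOpen_of S hS⟩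
  exact hS y hyS ((mem_cylinder_comm x y n).1 hy)

lemma exists_cylinder_subset_of_isOpen {U : Set (Bd m)} (hU : IsOpen U) {x : Bd m}
    (hx : x ∈ U) : ∃ n, cylinder x n ⊆ U := by
  obtain ⟨_, ⟨y, n, rfl⟩, hxy, hsub⟩ :=
    (isTopologicalBasis_cylinders _).exists_subset_of_mem_open hx hU
  exact ⟨n, mem_cylinder_iff_eq.1 hxy ▸ hsub⟩

lemma exists_level_forall_cylinder_subset {ι : Type*} {U : ι → Set (Bd m)}
    (hU : ∀ i, IsOpen (U i)) (hcover : ∀ x, ∃ i, x ∈ U i) :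
    ∃ N, ∀ x, ∃ i, cylinder x N ⊆ U i := by
  choose i hi using hcover
  choose n hn using fun x => exists_cylinder_subset_of_isOpen (hU (i x)) (hi x)
  obtain ⟨F, hF⟩ := isCompact_univ.elim_finite_subcover (fun x => cylinder x (n x))
    (fun x => isOpen_cylinder _ x (n x)) fun y _ => mem_iUnion.2 ⟨y, self_mem_cylinder y _⟩
  refine ⟨F.sup n, fun y => ?_⟩
  obtain ⟨x, hxF, hyx⟩ := mem_iUnion₂.1 (hF (mem_univ y))
  refine ⟨i x, ?_⟩
  calc cylinder y (F.sup n) ⊆ cylinder y (n x) := cylinder_anti y (Finset.le_sup hxF)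
    _ = cylinder x (n x) := mem_cylinder_iff_eq.1 hyx
    _ ⊆ U (i x) := hn x

lemma mem_closure_iff_forall_cylinder {s : Set (Bd m)} {y : Bd m} :
    y ∈ closure s ↔ ∀ n, ∃ x ∈ s, x ∈ cylinder y n := by
  rw [(isTopologicalBasis_cylinders _).mem_closure_iff]
  constructor
  · intro h n
    obtain ⟨x, hxy, hxs⟩ := h _ ⟨y, n, rfl⟩ (self_mem_cylinder y n)
    exact ⟨x, hxs, hxy⟩
  · rintro h _ ⟨z, n, rfl⟩ hyz
    obtain ⟨x, hxs, hxy⟩ := h n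
    exact ⟨x, mem_cylinder_iff_eq.1 hyz ▸ hxy, hxs⟩

end Cylinders

section TreeAut

variable {m : ℕ → ℕ}

lemma apply_mem_cylinder_of_mem_treeAutGroup {g : Equiv.Perm (Bd m)} (hg : g ∈ treeAutGroup m)
    {x y : Bd m} {n : ℕ} (h : y ∈ cylinder x n) : g y ∈ cylinder (g x) n := by
  have hg' : IsTreeAut g := hg
  exact (hg' n y x).1 h

def vertexStabilizer (x : Bd m) (n : ℕ) : Subgroup (Equiv.Perm (Bd m)) where
  carrier := {g | g ∈ treeAutGroup m ∧ g x ∈ cylinder x n}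
  one_mem' := ⟨(treeAutGroup m).one_mem, self_mem_cylinder x n⟩
  mul_mem' := fun {g h} ⟨hg, hgx⟩ ⟨hh, hhx⟩ =>
    ⟨mul_mem hg hh, mem_cylinder_iff_eq.2
      ((mem_cylinder_iff_eq.1 (apply_mem_cylinder_of_mem_treeAutGroup hg hhx)).trans
        (mem_cylinder_iff_eq.1 hgx))⟩
  inv_mem' := fun {g} ⟨hg, hgx⟩ => by
    refine ⟨inv_mem hg, ?_⟩
    have := apply_mem_cylinder_of_mem_treeAutGroup (inv_mem hg) ((mem_cylinder_comm _ _ n).1 hgx)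
    simpa using this

variable {σ : Equiv.Perm (Bd m)}

lemma exists_pos_pow_mem_cylinder (hσ : σ ∈ treeAutGroup m) (n : ℕ) (x : Bd m) :
    ∃ p, 0 < p ∧ (σ ^ p) x ∈ cylinder x n := by
  obtain ⟨a, b, hab, h⟩ :=
    Finite.exists_ne_map_eq_of_infinite fun j : ℕ => fun i : Fin n => (σ ^ j) x i
  wlog hlt : a < b generalizing a b
  · exact this b a hab.symm h.symm (by omega)
  refine ⟨b - a, by omega, ?_⟩
  have hσa : IsTreeAut (σ ^ a) := (treeAutGroup m).pow_mem hσ a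
  refine (hσa n _ _).2 fun i hi => ?_
  rw [← Equiv.Perm.mul_apply, ← pow_add, Nat.add_sub_cancel' hlt.le]
  exact (congrFun h ⟨i, hi⟩).symm

lemma exists_nat_pow_mem_cylinder (hσ : σ ∈ treeAutGroup m) (n : ℕ) (x : Bd m) (k : ℤ) :
    ∃ r : ℕ, (σ ^ k) x ∈ cylinder ((σ ^ r) x) n := by
  obtain ⟨p, hp, hper⟩ := exists_pos_pow_mem_cylinder hσ n x
  have hstab : (σ ^ p) ^ (k / p) ∈ vertexStabilizer x n :=
    zpow_mem (⟨pow_mem hσ p, hper⟩ : σ ^ p ∈ vertexStabilizer x n) _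
  have hk : σ ^ k = σ ^ (k % p).toNat * (σ ^ p) ^ (k / p) := by
    rw [← zpow_natCast, Int.toNat_of_nonneg (Int.emod_nonneg _ (by omega)), ← zpow_natCast,
      ← zpow_mul, ← zpow_add, Int.emod_add_mul_ediv]
  refine ⟨(k % p).toNat, ?_⟩
  rw [hk, Equiv.Perm.mul_apply]
  exact apply_mem_cylinder_of_mem_treeAutGroup (pow_mem hσ _) hstab.2

end TreeAut

section OrbitClosure

variable {m : ℕ → ℕ} {σ : Equiv.Perm (Bd m)}

lemma mem_closure_orbitZ_iff {x y : Bd m} :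
    y ∈ closure (orbitZ σ x) ↔ ∀ n, ∃ k : ℤ, (σ ^ k) x ∈ cylinder y n := by
  simp only [mem_closure_iff_forall_cylinder, orbitZ, mem_ofPred_eq, exists_exists_eq_and]

lemma mem_closure_orbitZ_self (x : Bd m) : x ∈ closure (orbitZ σ x) :=
  subset_closure ⟨0, by simp⟩

lemma pow_apply_mem_closure_orbitZ (j : ℕ) (x : Bd m) : (σ ^ j) x ∈ closure (orbitZ σ x) :=
  subset_closure ⟨j, by rw [zpow_natCast]⟩

lemma zpow_apply_mem_closure_orbitZ (hσ : σ ∈ treeAutGroup m) (j : ℤ) {x y : Bd m}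
    (hy : y ∈ closure (orbitZ σ x)) : (σ ^ j) y ∈ closure (orbitZ σ x) := by
  rw [mem_closure_orbitZ_iff] at hy ⊢
  intro n
  obtain ⟨k, hk⟩ := hy n
  refine ⟨j + k, ?_⟩
  rw [zpow_add, Equiv.Perm.mul_apply]
  exact apply_mem_cylinder_of_mem_treeAutGroup (zpow_mem hσ j) hk

lemma mem_closure_orbitZ_comm (hσ : σ ∈ treeAutGroup m) {x y : Bd m} :
    y ∈ closure (orbitZ σ x) ↔ x ∈ closure (orbitZ σ y) := by
  suffices ∀ x y : Bd m, y ∈ closure (orbitZ σ x) → x ∈ closure (orbitZ σ y) from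
    ⟨this x y, this y x⟩
  intro x y hy
  rw [mem_closure_orbitZ_iff] at hy ⊢
  intro n
  obtain ⟨k, hk⟩ := hy n
  refine ⟨-k, (mem_cylinder_comm _ _ n).1 ?_⟩
  simpa using apply_mem_cylinder_of_mem_treeAutGroup (zpow_mem hσ (-k)) hk

lemma closure_orbitZ_subset_of_mem (hσ : σ ∈ treeAutGroup m) {x y : Bd m}
    (hy : y ∈ closure (orbitZ σ x)) : closure (orbitZ σ y) ⊆ closure (orbitZ σ x) :=
  closure_minimal (by rintro _ ⟨k, rfl⟩; exact zpow_apply_mem_closure_orbitZ hσ k hy)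
    isClosed_closure

lemma closure_orbitZ_eq_of_mem (hσ : σ ∈ treeAutGroup m) {x y : Bd m}
    (hy : y ∈ closure (orbitZ σ x)) : closure (orbitZ σ y) = closure (orbitZ σ x) :=
  (closure_orbitZ_subset_of_mem hσ hy).antisymm
    (closure_orbitZ_subset_of_mem hσ ((mem_closure_orbitZ_comm hσ).1 hy))

lemma exists_forall_cylinder_subset_closure_orbitZ (hσ : σ ∈ treeAutGroup m)
    (h : ∀ x, IsOpen (closure (orbitZ σ x))) : ∃ N, ∀ y, cylinder y N ⊆ closure (orbitZ σ y) := by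
  obtain ⟨N, hN⟩ := exists_level_forall_cylinder_subset h fun x => ⟨x, mem_closure_orbitZ_self x⟩
  refine ⟨N, fun y => ?_⟩
  obtain ⟨x, hx⟩ := hN y
  rwa [← closure_orbitZ_eq_of_mem hσ (hx (self_mem_cylinder y N))] at hx

end OrbitClosure

section MinimalComponents

variable {σ : Equiv.Perm (Bd (fun _ => d))}

lemma isMinimalComponent_closure_orbitZ (hσ : σ ∈ treeAutGroup (fun _ => d))
    (x : Bd (fun _ => d)) : IsMinimalComponent σ (closure (orbitZ σ x)) := by
  refine ⟨⟨x, mem_closure_orbitZ_self x⟩, isClosed_closure, ?_,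
    fun y hy => closure_orbitZ_eq_of_mem hσ hy⟩
  ext z
  refine ⟨?_, fun hz => ⟨σ⁻¹ z, ?_, σ.apply_symm_apply z⟩⟩
  · rintro ⟨y, hy, rfl⟩
    simpa using zpow_apply_mem_closure_orbitZ hσ 1 hy
  · simpa using zpow_apply_mem_closure_orbitZ hσ (-1) hz

lemma isMinimalComponent_iff (hσ : σ ∈ treeAutGroup (fun _ => d)) {X : Set (Bd (fun _ => d))} :
    IsMinimalComponent σ X ↔ ∃ x, closure (orbitZ σ x) = X :=
  ⟨fun ⟨⟨x, hx⟩, _, _, hmin⟩ => ⟨x, hmin x hx⟩,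
    fun ⟨x, hx⟩ => hx ▸ isMinimalComponent_closure_orbitZ hσ x⟩

lemma finite_setOf_isMinimalComponent (hσ : σ ∈ treeAutGroup (fun _ => d))
    (h : ∀ x, IsOpen (closure (orbitZ σ x))) : {X | IsMinimalComponent σ X}.Finite := by
  obtain ⟨I, hI⟩ := isCompact_univ.elim_finite_subcover _ h
    fun x _ => mem_iUnion.2 ⟨x, mem_closure_orbitZ_self x⟩
  refine (I.finite_toSet.image fun x => closure (orbitZ σ x)).subset ?_
  intro X hX
  obtain ⟨x, rfl⟩ := (isMinimalComponent_iff hσ).1 hX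
  obtain ⟨i, hi, hxi⟩ := mem_iUnion₂.1 (hI (mem_univ x))
  exact ⟨i, hi, (closure_orbitZ_eq_of_mem hσ hxi).symm⟩

lemma isOpen_closure_orbitZ_of_finite (hσ : σ ∈ treeAutGroup (fun _ => d))
    (h : {X | IsMinimalComponent σ X}.Finite) (x : Bd (fun _ => d)) :
    IsOpen (closure (orbitZ σ x)) := by
  have hcompl : (closure (orbitZ σ x))ᶜ = ⋃ X ∈ {X | IsMinimalComponent σ X ∧ x ∉ X}, X := by
    ext z
    simp only [mem_compl_iff, mem_iUnion, mem_ofPred_eq, exists_prop]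
    constructor
    · intro hz
      exact ⟨closure (orbitZ σ z), ⟨isMinimalComponent_closure_orbitZ hσ z,
        fun hx => hz ((mem_closure_orbitZ_comm hσ).1 hx)⟩, mem_closure_orbitZ_self z⟩
    · rintro ⟨X, ⟨hX, hxX⟩, hzX⟩ hzx
      obtain ⟨c, rfl⟩ := (isMinimalComponent_iff hσ).1 hX
      exact hxX (closure_orbitZ_eq_of_mem hσ hzX ▸ (mem_closure_orbitZ_comm hσ).1 hzx)
  rw [← isClosed_compl_iff, hcompl]
  exact (h.subset fun X hX => hX.1).isClosed_biUnion fun X hX => hX.1.2.1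

end MinimalComponents

section StableCycles

lemma isClopen_setOf_aboveCycle (σ : Equiv.Perm (Bd (fun _ => d))) (n : ℕ)
    (v : Bd (fun _ => d)) : IsClopen {y | AboveCycle σ n v y} :=
  isClopen_of_forall_cylinder_subset n fun _ ⟨j, hj⟩ _ hz =>
    ⟨j, fun i hi => (hz i hi).trans (hj i hi)⟩

variable {σ : Equiv.Perm (Bd (fun _ => d))} {n k : ℕ} {v : Bd (fun _ => d)}

lemma closure_orbitZ_eq_setOf_aboveCycle (hσ : σ ∈ treeAutGroup (fun _ => d))
    (hv : InStableCycle σ n k v) {x : Bd (fun _ => d)} (hx : x ∈ cylinder v n) :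
    closure (orbitZ σ x) = {y | AboveCycle σ n v y} := by
  refine (closure_minimal ?_ (isClopen_setOf_aboveCycle σ n v).isClosed).antisymm fun y hy => ?_
  · rintro _ ⟨l, rfl⟩
    obtain ⟨j, hj⟩ := exists_nat_pow_mem_cylinder hσ n v l
    have hlx : (σ ^ l) x ∈ cylinder ((σ ^ l) v) n :=
      apply_mem_cylinder_of_mem_treeAutGroup (zpow_mem hσ l) hx
    rw [mem_cylinder_iff_eq.1 hj] at hlx
    exact ⟨j, hlx⟩
  · refine mem_closure_orbitZ_iff.2 fun N => ?_
    obtain ⟨t, ht⟩ := hv.2 (n + N + 1) (by omega) x y ⟨0, by simpa using hx⟩ hy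
    exact ⟨t, by rw [zpow_natCast]; exact cylinder_anti y (by omega) ht⟩

lemma isClopen_closure_orbitZ_of_stronglySettledAut (hσ : σ ∈ treeAutGroup (fun _ => d))
    (h : StronglySettledAut σ) (x : Bd (fun _ => d)) : IsClopen (closure (orbitZ σ x)) := by
  obtain ⟨n, -, hn⟩ := h
  obtain ⟨v, hvx, k, hv⟩ := hn fun i => x i
  rw [closure_orbitZ_eq_setOf_aboveCycle hσ hv fun i hi => (hvx ⟨i, hi⟩).symm]
  exact isClopen_setOf_aboveCycle σ n v

lemma exists_inCycle (hσ : σ ∈ treeAutGroup (fun _ => d)) (n : ℕ) (v : Bd (fun _ => d)) :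
    ∃ k, InCycle σ n k v := by
  classical
  have hex := exists_pos_pow_mem_cylinder hσ n v
  exact ⟨Nat.find hex, (Nat.find_spec hex).1, (Nat.find_spec hex).2,
    fun j hj hjk hper => Nat.find_min hex hjk ⟨hj, hper⟩⟩

lemma inStableCycle_of_forall_cylinder_subset (hσ : σ ∈ treeAutGroup (fun _ => d))
    (h : ∀ y, cylinder y n ⊆ closure (orbitZ σ y)) (hk : InCycle σ n k v) :
    InStableCycle σ n k v := by
  have above : ∀ x, AboveCycle σ n v x → x ∈ closure (orbitZ σ v) := fun x ⟨j, hj⟩ =>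
    closure_orbitZ_eq_of_mem hσ (pow_apply_mem_closure_orbitZ j v) ▸ h _ hj
  refine ⟨hk, fun l _ x y hx hy => ?_⟩
  have hyx : y ∈ closure (orbitZ σ x) := closure_orbitZ_eq_of_mem hσ (above x hx) ▸ above y hy
  obtain ⟨k', hk'⟩ := mem_closure_orbitZ_iff.1 hyx l
  obtain ⟨t, ht⟩ := exists_nat_pow_mem_cylinder hσ l x k'
  exact ⟨t, mem_cylinder_iff_eq.2
    ((mem_cylinder_iff_eq.1 ht).symm.trans (mem_cylinder_iff_eq.1 hk'))⟩

lemma stronglySettledAut_of_isOpen_closure_orbitZ (hσ : σ ∈ treeAutGroup (fun _ => d))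
    (h : ∀ x, IsOpen (closure (orbitZ σ x))) : StronglySettledAut σ := by
  obtain ⟨N, hN⟩ := exists_forall_cylinder_subset_closure_orbitZ hσ h
  refine ⟨N + 1, N.succ_pos, fun w => ?_⟩
  let v : Bd (fun _ => d) := fun i => if hi : i < N + 1 then w ⟨i, hi⟩ else w 0
  obtain ⟨k, hk⟩ := exists_inCycle hσ (N + 1) v
  exact ⟨v, fun i => dif_pos i.isLt, k, inStableCycle_of_forall_cylinder_subset hσ
    (fun y => (cylinder_anti y N.le_succ).trans (hN y)) hk⟩

end StableCycles

theorem settled_stmt15_general (d : ℕ)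
    (σ : Equiv.Perm (Bd (fun _ => d))) (hσ : σ ∈ treeAutGroup (fun _ => d)) :
    List.TFAE
      [ StronglySettledAut σ,
        (∀ x : Bd (fun _ => d), IsClopen (closure (orbitZ σ x))),
        {X : Set (Bd (fun _ => d)) | IsMinimalComponent σ X}.Finite ] := by
  tfae_have 1 → 2 := isClopen_closure_orbitZ_of_stronglySettledAut hσ
  tfae_have 2 → 1 := fun h => stronglySettledAut_of_isOpen_closure_orbitZ hσ fun x => (h x).isOpen
  tfae_have 2 → 3 := fun h => finite_setOf_isMinimalComponent hσ fun x => (h x).isOpen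
  tfae_have 3 → 2 := fun h x => ⟨isClosed_closure, isOpen_closure_orbitZ_of_finite hσ h x⟩
  tfae_finish

/-- For an automorphism `σ` of the `d`-ary rooted tree the following are
equivalent: (1) `σ` is strongly settled; (2) for every boundary point `x` the
closure of the `σ`-orbit of `x` is clopen; (3) the action of `⟨σ⟩` on the
boundary has only finitely many minimal components. -/
theorem settled_stmt15 (d : ℕ) (hd : 2 ≤ d)
    (σ : Equiv.Perm (Bd (fun _ => d))) (hσ : σ ∈ treeAutGroup (fun _ => d)) :
    List.TFAE
      [ StronglySettledAut σ,
        (∀ x : Bd (fun _ => d), IsClopen (closure (orbitZ σ x))),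
        {X : Set (Bd (fun _ => d)) | IsMinimalComponent σ X}.Finite ] :=
  settled_stmt15_general d σ hσ
end

section
/- The set of strongly settled automorphisms is dense in Aut(T) for T the d-ary rooted tree: for every τ ∈ Aut(T) and every n ≥ 1 there exists a strongly settled σ ∈ Aut(T) agreeing with τ on V_n (so D(τ, σ) ≤ 2^{−n}). -/
variable {d : ℕ}

namespace DigitSequence

/-- `t 0 + t 1 * d + ⋯ + t (m - 1) * d ^ (m - 1)`. -/
def prefixValue (m : ℕ) (t : ℕ → Fin d) : ℕ := finFunctionFinEquiv fun i : Fin m => t i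

lemma prefixValue_nonneg_lt (m : ℕ) (t : ℕ → Fin d) :
    0 ≤ (prefixValue m t : ℤ) ∧ (prefixValue m t : ℤ) < (d : ℤ) ^ m :=
  ⟨by positivity, by exact_mod_cast (finFunctionFinEquiv _).isLt⟩

lemma prefixValue_eq_iff {m : ℕ} {t s : ℕ → Fin d} :
    prefixValue m t = prefixValue m s ↔ ∀ i < m, t i = s i := by
  rw [prefixValue, prefixValue, Fin.val_inj, finFunctionFinEquiv.apply_eq_iff_eq, funext_iff,
    Fin.forall_iff]

lemma prefixValue_succ (m : ℕ) (t : ℕ → Fin d) :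
    prefixValue (m + 1) t = prefixValue m t + t m * d ^ m := by
  simp only [prefixValue, finFunctionFinEquiv_apply, Fin.sum_univ_castSucc, Fin.val_castSucc,
    Fin.val_last]

lemma eq_of_prefixValue_eq {t s : ℕ → Fin d} (h : ∀ m, prefixValue m t = prefixValue m s) :
    t = s :=
  funext fun j => prefixValue_eq_iff.mp (h (j + 1)) j j.lt_succ_self

/-- The digit sequence of the `d`-adic integer `t + c`. -/
def addDigits (c : ℤ) (t : ℕ → Fin d) : ℕ → Fin d := fun j =>
  ⟨(((prefixValue (j + 1) t + c) % (d : ℤ) ^ (j + 1)) / (d : ℤ) ^ j).toNat, by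
    have hd : 0 < (d : ℤ) := by exact_mod_cast (t 0).pos
    have hlt : (prefixValue (j + 1) t + c) % (d : ℤ) ^ (j + 1) < d * d ^ j := by
      rw [← pow_succ']; exact Int.emod_lt_of_pos _ (pow_pos hd _)
    have := Int.ediv_lt_of_lt_mul (pow_pos hd j) hlt
    omega⟩

lemma prefixValue_addDigits (c : ℤ) (t : ℕ → Fin d) (m : ℕ) :
    (prefixValue m (addDigits c t) : ℤ) = (prefixValue m t + c) % (d : ℤ) ^ m := by
  induction m with
  | zero => simp [prefixValue]
  | succ m ih =>
    have hd : 0 < (d : ℤ) := by exact_mod_cast (t 0).pos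
    set X := (prefixValue (m + 1) t + c) % (d : ℤ) ^ (m + 1)
    have hX : X % (d : ℤ) ^ m = (prefixValue m t + c) % (d : ℤ) ^ m := by
      rw [Int.emod_emod_of_dvd _ (pow_dvd_pow _ m.le_succ), prefixValue_succ]
      push_cast
      rw [add_right_comm, Int.add_mul_emod_self_right]
    have hdigit : ((addDigits c t m : ℕ) : ℤ) = X / (d : ℤ) ^ m :=
      Int.toNat_of_nonneg (Int.ediv_nonneg (Int.emod_nonneg _ (pow_pos hd _).ne')
        (pow_pos hd _).le)
    rw [prefixValue_succ, Nat.cast_add, Nat.cast_mul, ih, hdigit, ← hX, Nat.cast_pow,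
      Int.emod_add_ediv_mul]

lemma addDigits_zero (t : ℕ → Fin d) : addDigits 0 t = t := by
  refine eq_of_prefixValue_eq fun m => ?_
  have := prefixValue_nonneg_lt m t
  rw [← Nat.cast_inj (R := ℤ), prefixValue_addDigits, add_zero, Int.emod_eq_of_lt this.1 this.2]

lemma addDigits_addDigits (c c' : ℤ) (t : ℕ → Fin d) :
    addDigits c (addDigits c' t) = addDigits (c' + c) t := by
  refine eq_of_prefixValue_eq fun m => ?_
  rw [← Nat.cast_inj (R := ℤ), prefixValue_addDigits, prefixValue_addDigits,
    prefixValue_addDigits, Int.emod_add_emod, add_assoc]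

lemma exists_addDigits_eq (c : ℤ) (t s : ℕ → Fin d) (m : ℕ) :
    ∃ a : ℕ, ∀ i < m, addDigits (c + a) t i = s i := by
  have hd : 0 < (d : ℤ) := by exact_mod_cast (t 0).pos
  refine ⟨((prefixValue m s - prefixValue m t - c) % (d : ℤ) ^ m).toNat, ?_⟩
  rw [← prefixValue_eq_iff, ← Nat.cast_inj (R := ℤ), prefixValue_addDigits,
    Int.toNat_of_nonneg (Int.emod_nonneg _ (pow_pos hd m).ne'), ← add_assoc, Int.add_emod_emod]
  have := prefixValue_nonneg_lt m s
  rw [show (prefixValue m t : ℤ) + c + (prefixValue m s - prefixValue m t - c) = prefixValue m s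
    by ring, Int.emod_eq_of_lt this.1 this.2]

def addDigitsPerm (c : ℤ) : Equiv.Perm (ℕ → Fin d) where
  toFun := addDigits c
  invFun := addDigits (-c)
  left_inv t := by rw [addDigits_addDigits, add_neg_cancel, addDigits_zero]
  right_inv t := by rw [addDigits_addDigits, neg_add_cancel, addDigits_zero]

lemma isTreeAut_addDigitsPerm (c : ℤ) : IsTreeAut (m := fun _ => d) (addDigitsPerm c) := by
  intro M t s
  show _ ↔ ∀ i < M, addDigits c t i = addDigits c s i
  rw [← prefixValue_eq_iff, ← prefixValue_eq_iff, ← Nat.cast_inj (R := ℤ),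
    ← Nat.cast_inj (R := ℤ), prefixValue_addDigits, prefixValue_addDigits]
  have ht := prefixValue_nonneg_lt M t
  have hs := prefixValue_nonneg_lt M s
  refine ⟨fun h => by rw [h], fun h => ?_⟩
  have := Int.ModEq.add_right_cancel' c h
  rwa [Int.ModEq, Int.emod_eq_of_lt ht.1 ht.2, Int.emod_eq_of_lt hs.1 hs.2] at this

end DigitSequence

section
open Finset Function

namespace Equiv.Perm

variable {V : Type*} (π : Perm V)

lemma pow_minimalPeriod_apply (p : V) : (π ^ minimalPeriod π p) p = p := by
  rw [← iterate_eq_pow]; exact iterate_minimalPeriod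

lemma pow_mod_minimalPeriod_apply (p : V) (i : ℕ) :
    (π ^ (i % minimalPeriod π p)) p = (π ^ i) p := by
  rw [← iterate_eq_pow, ← iterate_eq_pow]; exact iterate_mod_minimalPeriod_eq

lemma pow_minimalPeriod_mul_add_apply (p : V) (a l : ℕ) :
    (π ^ (minimalPeriod π p * a + l)) p = (π ^ l) p := by
  rw [add_comm, pow_add, mul_apply, pow_mul,
    pow_apply_eq_self_of_apply_eq_self (pow_minimalPeriod_apply π p)]

lemma sum_range_minimalPeriod_mul_add {M : Type*} [AddCommMonoid M] (f : V → M) (p : V)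
    (a j : ℕ) :
    ∑ l ∈ range (minimalPeriod π p * a + j), f ((π ^ l) p) =
      a • ∑ l ∈ range (minimalPeriod π p), f ((π ^ l) p) + ∑ l ∈ range j, f ((π ^ l) p) := by
  have hmul : ∀ a, ∑ l ∈ range (minimalPeriod π p * a), f ((π ^ l) p) =
      a • ∑ l ∈ range (minimalPeriod π p), f ((π ^ l) p) := by
    intro a
    induction a with
    | zero => simp
    | succ a ih =>
      rw [mul_add_one, sum_range_add, ih, succ_nsmul]
      simp only [pow_minimalPeriod_mul_add_apply]
  rw [sum_range_add, hmul]
  simp only [pow_minimalPeriod_mul_add_apply]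

noncomputable def cycleRep (p : V) : V := (Quotient.mk (SameCycle.setoid π) p).out

lemma sameCycle_cycleRep (p : V) : SameCycle π p (cycleRep π p) :=
  (Quotient.mk_out (s := SameCycle.setoid π) p).symm

lemma cycleRep_pow_apply (p : V) (l : ℕ) : cycleRep π ((π ^ l) p) = cycleRep π p :=
  congrArg Quotient.out (Quotient.sound (sameCycle_pow_left.mpr (SameCycle.refl π p)))

open Classical in
noncomputable def cycleRepIndicator (p : V) : ℤ := if cycleRep π p = p then 1 else 0

lemma sum_range_minimalPeriod_cycleRepIndicator [Finite V] (p : V) :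
    ∑ l ∈ range (minimalPeriod π p), cycleRepIndicator π ((π ^ l) p) = 1 := by
  have hk := minimalPeriod_pos_of_mem_periodicPts (π.injective.mem_periodicPts p)
  obtain ⟨i, hi⟩ := (sameCycle_cycleRep π p).exists_nat_pow_eq
  rw [sum_eq_single_of_mem (i % minimalPeriod π p) (mem_range.mpr (Nat.mod_lt _ hk))]
  · rw [cycleRepIndicator, cycleRep_pow_apply, pow_mod_minimalPeriod_apply, hi, if_pos rfl]
  · intro l hl hne
    simp only [cycleRepIndicator, cycleRep_pow_apply, ← hi, ite_eq_right_iff, one_ne_zero,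
      imp_false]
    intro h
    refine hne (iterate_injOn_Iio_minimalPeriod (mem_range.mp hl) (Nat.mod_lt i hk) ?_)
    simp only [iterate_eq_pow, pow_mod_minimalPeriod_apply, h]

end Equiv.Perm

end

namespace TreeAut
open Equiv Equiv.Perm Finset Function DigitSequence

section SplitAt

variable {α : Type*}

def splitAt (N : ℕ) : (ℕ → α) ≃ (Fin N → α) × (ℕ → α) where
  toFun x := (fun i => x i, fun j => x (N + j))
  invFun pt i := if h : i < N then pt.1 ⟨i, h⟩ else pt.2 (i - N)
  left_inv x := by
    funext i
    by_cases h : i < N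
    · simp [h]
    · simp only [h, dite_false]; congr 1; omega
  right_inv pt := by
    ext i
    · simp
    · simp

@[simp] lemma splitAt_fst_apply (N : ℕ) (x : ℕ → α) (i : Fin N) :
    (splitAt N x).1 i = x i :=
  rfl

@[simp] lemma splitAt_snd_apply (N : ℕ) (x : ℕ → α) (j : ℕ) :
    (splitAt N x).2 j = x (N + j) :=
  rfl

lemma splitAt_symm_apply_of_lt {N i : ℕ} (pt : (Fin N → α) × (ℕ → α)) (h : i < N) :
    (splitAt N).symm pt i = pt.1 ⟨i, h⟩ :=
  dif_pos h

lemma splitAt_fst_eq_iff {N : ℕ} {x y : ℕ → α} :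
    (splitAt N x).1 = (splitAt N y).1 ↔ ∀ i < N, x i = y i := by
  simp [funext_iff, Fin.forall_iff]

lemma forall_lt_add_eq_iff {N M : ℕ} {x y : ℕ → α} :
    (∀ i < N + M, x i = y i) ↔
      (splitAt N x).1 = (splitAt N y).1 ∧ ∀ j < M, (splitAt N x).2 j = (splitAt N y).2 j := by
  rw [splitAt_fst_eq_iff]
  refine ⟨fun h => ⟨fun i hi => h i (by omega), fun j hj => h (N + j) (by omega)⟩,
    fun ⟨h₁, h₂⟩ i hi => ?_⟩
  by_cases hiN : i < N
  · exact h₁ i hiN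
  · simpa [show N + (i - N) = i by omega] using h₂ (i - N) (by omega)

end SplitAt

def shearAt (N : ℕ) (π : Perm (Fin N → Fin d)) (n : (Fin N → Fin d) → ℤ) :
    Perm (ℕ → Fin d) :=
  (splitAt N).trans ((prodShear π fun p => addDigitsPerm (n p)).trans (splitAt N).symm)

section Shear

variable {N : ℕ} (π : Perm (Fin N → Fin d)) (n : (Fin N → Fin d) → ℤ)

lemma splitAt_shearAt_apply (x : ℕ → Fin d) :
    splitAt N (shearAt N π n x) =
      (π (splitAt N x).1, addDigits (n (splitAt N x).1) (splitAt N x).2) := by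
  simp [shearAt, addDigitsPerm]

lemma splitAt_shearAt_pow_apply (j : ℕ) (x : ℕ → Fin d) :
    splitAt N ((shearAt N π n ^ j) x) = ((π ^ j) (splitAt N x).1,
      addDigits (∑ l ∈ range j, n ((π ^ l) (splitAt N x).1)) (splitAt N x).2) := by
  induction j with
  | zero => simp [addDigits_zero]
  | succ j ih =>
    rw [pow_succ', mul_apply, splitAt_shearAt_apply, ih]
    simp [addDigits_addDigits, sum_range_succ, pow_succ']

lemma forall_lt_pow_shearAt_apply_eq_iff (j : ℕ) (x y : ℕ → Fin d) :
    (∀ i < N, (shearAt N π n ^ j) x i = y i) ↔ (π ^ j) (splitAt N x).1 = (splitAt N y).1 := by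
  rw [← splitAt_fst_eq_iff, splitAt_shearAt_pow_apply]

end Shear

section LevelPerm

variable [NeZero d] (τ : Perm (ℕ → Fin d)) (hτ : IsTreeAut (m := fun _ => d) τ) (N : ℕ)

noncomputable def levelPerm : Perm (Fin N → Fin d) :=
  Equiv.ofBijective (fun p => (splitAt N (τ ((splitAt N).symm (p, 0)))).1)
    (Finite.injective_iff_bijective.mp fun p q h => by
      rw [splitAt_fst_eq_iff, ← hτ, ← splitAt_fst_eq_iff] at h
      simpa using h)

variable {τ N}

lemma levelPerm_splitAt_fst (x : ℕ → Fin d) :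
    levelPerm τ hτ N (splitAt N x).1 = (splitAt N (τ x)).1 := by
  refine splitAt_fst_eq_iff.mpr ((hτ N _ _).mp (splitAt_fst_eq_iff.mp ?_))
  simp

variable (n : (Fin N → Fin d) → ℤ)

lemma shearAt_levelPerm_apply_of_lt (x : ℕ → Fin d) {i : ℕ} (h : i < N) :
    shearAt N (levelPerm τ hτ N) n x i = τ x i := by
  have := congrArg Prod.fst (splitAt_shearAt_apply (levelPerm τ hτ N) n x)
  rw [levelPerm_splitAt_fst, splitAt_fst_eq_iff] at this
  exact this i h

lemma isTreeAut_shearAt_levelPerm :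
    IsTreeAut (m := fun _ => d) (shearAt N (levelPerm τ hτ N) n) := by
  intro M x y
  rcases le_or_gt M N with hM | hM
  · have h := shearAt_levelPerm_apply_of_lt hτ n
    rw [hτ M x y]
    exact forall₂_congr fun i hi => by rw [h x (hi.trans_le hM), h y (hi.trans_le hM)]
  · obtain ⟨M, rfl⟩ := Nat.exists_eq_add_of_le hM.le
    rw [forall_lt_add_eq_iff, forall_lt_add_eq_iff, splitAt_shearAt_apply, splitAt_shearAt_apply,
      (levelPerm τ hτ N).injective.eq_iff]
    exact and_congr_right fun hxy => by
      rw [hxy]; exact isTreeAut_addDigitsPerm (n (splitAt N y).1) M _ _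

end LevelPerm

section Stable

variable {N : ℕ} (π : Perm (Fin N → Fin d))

lemma inCycle_shearAt (n : (Fin N → Fin d) → ℤ) (v : ℕ → Fin d) :
    InCycle (shearAt N π n) N (minimalPeriod π (splitAt N v).1) v := by
  refine ⟨minimalPeriod_pos_of_mem_periodicPts (π.injective.mem_periodicPts _), ?_,
    fun j hj hjk => ?_⟩
  · rw [forall_lt_pow_shearAt_apply_eq_iff]
    exact pow_minimalPeriod_apply π _
  · rw [forall_lt_pow_shearAt_apply_eq_iff, ← iterate_eq_pow]
    exact not_isPeriodicPt_of_pos_of_lt_minimalPeriod hj.ne' hjk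

/-- Each full turn around the `π`-cycle adds `1` to the `d`-adic integer formed by the digits
from level `N` on, so `a` turns followed by `j` steps reach every residue modulo `d ^ M`. -/
lemma exists_pow_shearAt_eq {x y : ℕ → Fin d} (h : SameCycle π (splitAt N x).1 (splitAt N y).1)
    (M : ℕ) : ∃ T, ∀ i < N + M, (shearAt N π (cycleRepIndicator π) ^ T) x i = y i := by
  set p := (splitAt N x).1
  obtain ⟨j, hj⟩ := h.exists_nat_pow_eq
  obtain ⟨a, ha⟩ := exists_addDigits_eq (∑ l ∈ range j, cycleRepIndicator π ((π ^ l) p))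
    (splitAt N x).2 (splitAt N y).2 M
  refine ⟨minimalPeriod π p * a + j, ?_⟩
  rw [forall_lt_add_eq_iff, splitAt_shearAt_pow_apply, sum_range_minimalPeriod_mul_add,
    sum_range_minimalPeriod_cycleRepIndicator, pow_minimalPeriod_mul_add_apply]
  exact ⟨hj, by simpa [add_comm] using ha⟩

lemma inStableCycle_shearAt (v : ℕ → Fin d) :
    InStableCycle (shearAt N π (cycleRepIndicator π)) N (minimalPeriod π (splitAt N v).1) v := by
  refine ⟨inCycle_shearAt π _ v, fun M hM x y ⟨j₁, hx⟩ ⟨j₂, hy⟩ => ?_⟩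
  obtain ⟨M, rfl⟩ := Nat.exists_eq_add_of_le hM.le
  refine exists_pow_shearAt_eq π ?_ M
  rw [← (forall_lt_pow_shearAt_apply_eq_iff π _ j₁ v x).mp fun i hi => (hx i hi).symm,
    ← (forall_lt_pow_shearAt_apply_eq_iff π _ j₂ v y).mp fun i hi => (hy i hi).symm]
  exact sameCycle_pow_left.mpr (sameCycle_pow_right.mpr (SameCycle.refl _ _))

lemma stableVertex_shearAt [NeZero d] (w : Fin N → Fin d) :
    StableVertex (shearAt N π (cycleRepIndicator π)) N w :=
  ⟨(splitAt N).symm (w, 0), fun i => splitAt_symm_apply_of_lt _ i.isLt, _,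
    inStableCycle_shearAt π _⟩

end Stable

end TreeAut

theorem settled_stmt16_general (d : ℕ)
    (τ : Equiv.Perm (Bd (fun _ => d))) (hτ : τ ∈ treeAutGroup (fun _ => d)) (n : ℕ) :
    ∃ σ : Equiv.Perm (Bd (fun _ => d)), σ ∈ treeAutGroup (fun _ => d) ∧
      StronglySettledAut σ ∧ ∀ x : Bd (fun _ => d), ∀ i < n, σ x i = τ x i := by
  rcases Nat.eq_zero_or_pos d with rfl | hd
  · exact ⟨τ, hτ, ⟨1, one_pos, fun w => (w 0).elim0⟩, fun _ _ _ => rfl⟩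
  have : NeZero d := ⟨hd.ne'⟩
  let N := max n 1
  let π := TreeAut.levelPerm τ hτ N
  refine ⟨TreeAut.shearAt N π (Equiv.Perm.cycleRepIndicator π),
    TreeAut.isTreeAut_shearAt_levelPerm hτ _, ⟨N, by omega, TreeAut.stableVertex_shearAt π⟩,
    fun x i hi => TreeAut.shearAt_levelPerm_apply_of_lt hτ _ x (by omega)⟩

/-- The strongly settled automorphisms are dense in the automorphism group of
the `d`-ary rooted tree: for every `τ ∈ Aut(T)` and every `n ≥ 1` there is a
strongly settled `σ ∈ Aut(T)` agreeing with `τ` on the level-`n` vertices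
(equivalently, `D(τ, σ) ≤ 2⁻ⁿ` for the uniform metric). -/
theorem settled_stmt16 (d : ℕ) (hd : 2 ≤ d)
    (τ : Equiv.Perm (Bd (fun _ => d))) (hτ : τ ∈ treeAutGroup (fun _ => d)) (n : ℕ) :
    ∃ σ : Equiv.Perm (Bd (fun _ => d)), σ ∈ treeAutGroup (fun _ => d) ∧
      StronglySettledAut σ ∧ ∀ x : Bd (fun _ => d), ∀ i < n, σ x i = τ x i :=
  settled_stmt16_general d τ hτ n
end

section
/- Let T be the binary rooted tree and G = ⟨a, b | b² = 1, b a b = a⁻¹⟩ the infinite dihedral group realized in Aut(T) with a minimal. Then every element of the closure of G in Aut(T) that is not in the closure of ⟨a⟩ has order 2; consequently the settled elements are not dense in the closure of G. -/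
/-- `v` lies in a cycle of length `k` of (the map induced by) `f` on the
level-`n` vertices of the binary tree. -/
def InCycleF (f : Bd (fun _ => 2) → Bd (fun _ => 2)) (n k : ℕ) (v : Bd (fun _ => 2)) : Prop :=
  0 < k ∧ (∀ i < n, (f^[k] v) i = v i) ∧
    ∀ j, 0 < j → j < k → ¬ (∀ i < n, (f^[j] v) i = v i)

/-- `x` passes through a level-`n` vertex above the cycle of `v`. -/
def AboveCycleF (f : Bd (fun _ => 2) → Bd (fun _ => 2)) (n : ℕ)
    (v x : Bd (fun _ => 2)) : Prop :=
  ∃ j : ℕ, ∀ i < n, x i = (f^[j] v) i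

/-- The level-`n` vertex of `v` is in a stable cycle of length `k` of `f`. -/
def InStableCycleF (f : Bd (fun _ => 2) → Bd (fun _ => 2)) (n k : ℕ)
    (v : Bd (fun _ => 2)) : Prop :=
  InCycleF f n k v ∧
    ∀ mlev, n < mlev → ∀ x y : Bd (fun _ => 2), AboveCycleF f n v x → AboveCycleF f n v y →
      ∃ t : ℕ, ∀ i < mlev, (f^[t] x) i = y i

/-- The level-`n` vertex `w` of the binary tree is in a stable cycle of `f`. -/
def StableVertexF (f : Bd (fun _ => 2) → Bd (fun _ => 2)) (n : ℕ)
    (w : Fin n → Fin 2) : Prop :=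
  ∃ v : Bd (fun _ => 2), (∀ i : Fin n, v (i : ℕ) = w i) ∧ ∃ k : ℕ, InStableCycleF f n k v

/-- `f` is settled: the proportion of level-`n` vertices in stable cycles
tends to `1` as `n → ∞`. -/
def SettledF (f : Bd (fun _ => 2) → Bd (fun _ => 2)) : Prop :=
  Filter.Tendsto
    (fun n : ℕ => (Nat.card {w : Fin n → Fin 2 // StableVertexF f n w} : ℝ) /
      (Fintype.card (Fin n → Fin 2) : ℝ))
    Filter.atTop (nhds 1)

/-! Every element of `⟨a, b⟩` is `a ^ k` or `a ^ k * b`, and the latter are involutions. An element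
of the closure that is not in the closure of `⟨a⟩` is approximated at every level by elements
`a ^ k * b`, so it is an involution. An involution has orbits of size at most two, whereas a
stable cycle at level `n` must be a single cycle on the four vertices two levels below it; so
involutions have no stable cycles and are not settled.

Settled elements therefore cannot approximate `b` at level `2`: an approximant would lie outside
the closure of `⟨a⟩`, since if `b` acted on `V₂` as a power of `a`, the relation `b a b = a⁻¹`
would force `a² = 1` on `V₂`, contradicting the transitivity of `a` on its four vertices. -/

open Function

section Dihedral

variable {G : Type*} [Group G] {a b : G}

lemma conj_zpow_of_dihedral (hb2 : b ^ 2 = 1) (hrel : b * a * b = a⁻¹) (k : ℤ) :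
    b * a ^ k * b = a ^ (-k) := by
  have hb : b⁻¹ = b := inv_eq_of_mul_eq_one_left (by rw [← sq, hb2])
  rw [show b * a ^ k * b = b * a ^ k * b⁻¹ by rw [hb], ← conj_zpow, hb, hrel, inv_zpow, zpow_neg]

lemma zpow_mul_mul_self_of_dihedral (hb2 : b ^ 2 = 1) (hrel : b * a * b = a⁻¹) (k : ℤ) :
    a ^ k * b * (a ^ k * b) = 1 := by
  rw [show a ^ k * b * (a ^ k * b) = a ^ k * (b * a ^ k * b) by group,
    conj_zpow_of_dihedral hb2 hrel, ← zpow_add, add_neg_cancel, zpow_zero]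

lemma exists_eq_zpow_or_eq_zpow_mul_of_mem_closure (hb2 : b ^ 2 = 1)
    (hrel : b * a * b = a⁻¹) {g : G} (hg : g ∈ Subgroup.closure {a, b}) :
    ∃ k : ℤ, g = a ^ k ∨ g = a ^ k * b := by
  have hbb : b * b = 1 := by rw [← sq, hb2]
  have hswap (k : ℤ) : b * a ^ k = a ^ (-k) * b := by
    rw [← conj_zpow_of_dihedral hb2 hrel, mul_assoc _ b, hbb, mul_one]
  induction hg using Subgroup.closure_induction with
  | mem x hx =>
    rcases hx with rfl | rfl
    · exact ⟨1, .inl (zpow_one x).symm⟩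
    · exact ⟨0, .inr (by simp)⟩
  | one => exact ⟨0, .inl (zpow_zero a).symm⟩
  | mul x y _ _ hx hy =>
    obtain ⟨j, rfl | rfl⟩ := hx <;> obtain ⟨k, rfl | rfl⟩ := hy
    · exact ⟨j + k, .inl (zpow_add a j k).symm⟩
    · exact ⟨j + k, .inr (by rw [← mul_assoc, ← zpow_add])⟩
    · exact ⟨j + -k, .inr (by rw [mul_assoc, hswap, ← mul_assoc, ← zpow_add])⟩
    · refine ⟨j + -k, .inl ?_⟩
      rw [mul_assoc, ← mul_assoc b, hswap, mul_assoc, hbb, mul_one, ← zpow_add]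
  | inv x _ hx =>
    obtain ⟨j, rfl | rfl⟩ := hx
    · exact ⟨-j, .inl (zpow_neg a j).symm⟩
    · exact ⟨j, .inr (by rw [mul_inv_rev, inv_eq_of_mul_eq_one_left hbb, ← zpow_neg, hswap,
        neg_neg])⟩

lemma sq_eq_one_of_commute_of_dihedral (hab : Commute a b) (hb2 : b ^ 2 = 1)
    (hrel : b * a * b = a⁻¹) : a ^ 2 = 1 := by
  rw [← hab.eq, mul_assoc, ← sq, hb2, mul_one] at hrel
  rw [sq]
  nth_rw 2 [hrel]
  exact mul_inv_cancel a

lemma zpow_eq_one_or_eq_self_of_sq_eq_one (ha : a ^ 2 = 1) (k : ℤ) :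
    a ^ k = 1 ∨ a ^ k = a := by
  obtain ⟨q, rfl | rfl⟩ := Int.even_or_odd' k
  · left
    rw [zpow_mul, zpow_two, ← sq, ha, one_zpow]
  · right
    rw [zpow_add_one, zpow_mul, zpow_two, ← sq, ha, one_zpow, one_mul]

end Dihedral

lemma Function.Involutive.iterate_eq_or {α : Type*} {f : α → α} (hf : Involutive f)
    (t : ℕ) (x : α) : f^[t] x = x ∨ f^[t] x = f x := by
  induction t with
  | zero => exact .inl rfl
  | succ t ih =>
    rw [iterate_succ_apply']
    rcases ih with h | h <;> rw [h]
    exacts [.inr rfl, .inl (hf x)]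

section Levels

variable {m : ℕ → ℕ}

lemma IsTreeAut.apply_eq {g : Equiv.Perm (Bd m)} (hg : IsTreeAut g) {N : ℕ} {x y : Bd m}
    (h : ∀ i < N, x i = y i) {i : ℕ} (hi : i < N) : g x i = g y i :=
  (hg N x y).1 h i hi

variable (m) in
def levelSetoid (n : ℕ) : Setoid (Bd m) where
  r x y := ∀ i < n, x i = y i
  iseqv := ⟨fun _ _ _ => rfl, fun h i hi => (h i hi).symm,
    fun h h' i hi => (h i hi).trans (h' i hi)⟩

-- The vertex level `V n`: boundary points up to agreement on their first `n` coordinates.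
variable (m) in
abbrev Level (n : ℕ) : Type := Quotient (levelSetoid m n)

variable (m) in
def levelPerm (n : ℕ) : treeAutGroup m →* Equiv.Perm (Level m n) where
  toFun g := Quotient.congr g.1 (g.2 n)
  map_one' := by ext ⟨x⟩; rfl
  map_mul' _ _ := by ext ⟨x⟩; rfl

lemma level_mk_eq_mk_iff {n : ℕ} {x y : Bd m} :
    Quotient.mk (levelSetoid m n) x = Quotient.mk _ y ↔ ∀ i < n, x i = y i :=
  Quotient.eq

lemma levelPerm_eq_of_agree {n : ℕ} {g h : treeAutGroup m}
    (hgh : ∀ x, ∀ i < n, (g : Equiv.Perm (Bd m)) x i = (h : Equiv.Perm (Bd m)) x i) :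
    levelPerm m n g = levelPerm m n h := by
  ext ⟨x⟩
  exact level_mk_eq_mk_iff.2 (hgh x)

lemma exists_levelPerm_zpow_apply_eq {a : Equiv.Perm (Bd m)} (hamin : LevelTransitive a)
    (ha : a ∈ treeAutGroup m) (n : ℕ) (p q : Level m n) :
    ∃ k : ℤ, (levelPerm m n ⟨a, ha⟩ ^ k) p = q := by
  induction p using Quotient.inductionOn with | h x => ?_
  induction q using Quotient.inductionOn with | h y => ?_
  obtain ⟨k, hk⟩ := hamin n x y
  exact ⟨k, by rw [← map_zpow]; exact level_mk_eq_mk_iff.2 hk⟩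

end Levels

section Approximation

variable {m : ℕ → ℕ}

lemma involutive_of_forall_approx {f : Bd m → Bd m}
    (hf : ∀ n, ∃ g ∈ treeAutGroup m, g * g = 1 ∧ ∀ x, ∀ i < n, f x i = g x i) :
    Involutive f := by
  intro x
  funext i
  obtain ⟨g, hg, hgg, hfg⟩ := hf (i + 1)
  calc f (f x) i = g (f x) i := hfg _ i i.lt_succ_self
    _ = g (g x) i := IsTreeAut.apply_eq hg (hfg x) i.lt_succ_self
    _ = x i := by rw [← Equiv.Perm.mul_apply, hgg, Equiv.Perm.one_apply]

lemma involutive_of_inClosure_of_not_inClosure {a b : Equiv.Perm (Bd m)}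
    (ha : a ∈ treeAutGroup m) (hb : b ∈ treeAutGroup m) (hb2 : b ^ 2 = 1)
    (hrel : b * a * b = a⁻¹) {f : Bd m → Bd m}
    (hfG : InClosure (Subgroup.closure {a, b} : Set (Equiv.Perm (Bd m))) f)
    (hfa : ¬ InClosure (Subgroup.zpowers a : Set (Equiv.Perm (Bd m))) f) :
    Involutive f := by
  obtain ⟨n₀, hn₀⟩ : ∃ n₀, ∀ g ∈ Subgroup.zpowers a, ¬ ∀ x, ∀ i < n₀, f x i = g x i := by
    simpa [InClosure] using hfa
  have hG : Subgroup.closure {a, b} ≤ treeAutGroup m :=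
    (Subgroup.closure_le _).2 (Set.insert_subset_iff.2 ⟨ha, Set.singleton_subset_iff.2 hb⟩)
  refine involutive_of_forall_approx fun n => ?_
  obtain ⟨g, hgG, hfg⟩ := hfG (max n n₀)
  have hfg' (N : ℕ) (hN : N ≤ max n n₀) : ∀ x, ∀ i < N, f x i = g x i :=
    fun x i hi => hfg x i (by omega)
  obtain ⟨k, rfl | rfl⟩ := exists_eq_zpow_or_eq_zpow_mul_of_mem_closure hb2 hrel hgG
  · exact absurd (hfg' n₀ (le_max_right _ _)) (hn₀ _ (Subgroup.zpow_mem_zpowers a k))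
  · exact ⟨_, hG hgG, zpow_mul_mul_self_of_dihedral hb2 hrel k, hfg' n (le_max_left _ _)⟩

end Approximation

section Binary

lemma exists_agree_lt_and_ne_ne (v p q : Bd (fun _ => 2)) (n : ℕ) :
    ∃ y : Bd (fun _ => 2), (∀ i < n, y i = v i) ∧ ¬ (∀ i < n + 2, y i = p i) ∧
      ¬ (∀ i < n + 2, y i = q i) := by
  have hpair : ∀ u w : Fin 2 × Fin 2, ∃ r, r ≠ u ∧ r ≠ w := by decide
  obtain ⟨⟨r, s⟩, hp, hq⟩ := hpair (p n, p (n + 1)) (q n, q (n + 1))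
  obtain ⟨y, hyn, hyn', hyv⟩ : ∃ y : Bd (fun _ => 2),
      y n = r ∧ y (n + 1) = s ∧ ∀ i < n, y i = v i :=
    ⟨update (update v n r) (n + 1) s, by simp, by simp,
      fun i hi => by simp [update_of_ne (show i ≠ n by omega),
        update_of_ne (show i ≠ n + 1 by omega)]⟩
  refine ⟨y, hyv, fun h => hp ?_, fun h => hq ?_⟩
  · rw [← h n (by omega), ← h (n + 1) (by omega), hyn, hyn']
  · rw [← h n (by omega), ← h (n + 1) (by omega), hyn, hyn']

lemma levelPerm_sq_ne_one_of_levelTransitive {a : Equiv.Perm (Bd (fun _ => 2))}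
    (hamin : LevelTransitive a) (ha : a ∈ treeAutGroup (fun _ => 2)) :
    levelPerm (fun _ => 2) 2 ⟨a, ha⟩ ^ 2 ≠ 1 := by
  intro h2
  let x : Bd (fun _ => 2) := fun _ => 0
  obtain ⟨y, -, hyx, hyax⟩ := exists_agree_lt_and_ne_ne x x (a x) 0
  obtain ⟨k, hk⟩ := exists_levelPerm_zpow_apply_eq hamin ha 2 (Quotient.mk _ x) (Quotient.mk _ y)
  rcases zpow_eq_one_or_eq_self_of_sq_eq_one h2 k with h | h <;> rw [h] at hk
  · exact hyx fun i hi => (level_mk_eq_mk_iff.1 hk i hi).symm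
  · exact hyax fun i hi => (level_mk_eq_mk_iff.1 hk i hi).symm

lemma not_agree_zpow_of_dihedral {a b : Equiv.Perm (Bd (fun _ => 2))}
    (ha : a ∈ treeAutGroup (fun _ => 2)) (hb : b ∈ treeAutGroup (fun _ => 2))
    (hamin : LevelTransitive a) (hb2 : b ^ 2 = 1) (hrel : b * a * b = a⁻¹) (k : ℤ) :
    ¬ ∀ x, ∀ i < 2, b x i = (a ^ k) x i := by
  intro hk
  let π := levelPerm (fun _ => 2) 2
  let A : treeAutGroup (fun _ => 2) := ⟨a, ha⟩
  let B : treeAutGroup (fun _ => 2) := ⟨b, hb⟩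
  have hB : π B = π A ^ k := by rw [← map_zpow]; exact levelPerm_eq_of_agree hk
  have hB2 : π B ^ 2 = 1 := by rw [← map_pow, show B ^ 2 = 1 from Subtype.ext hb2, map_one]
  have hBA : π B * π A * π B = (π A)⁻¹ := by
    rw [← map_mul, ← map_mul, ← map_inv, show B * A * B = A⁻¹ from Subtype.ext hrel]
  exact levelPerm_sq_ne_one_of_levelTransitive hamin ha
    (sq_eq_one_of_commute_of_dihedral (hB ▸ (Commute.refl _).zpow_right k) hB2 hBA)

variable {f : Bd (fun _ => 2) → Bd (fun _ => 2)}

lemma not_inStableCycleF_of_involutive (hf : Involutive f) (n k : ℕ) (v : Bd (fun _ => 2)) :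
    ¬ InStableCycleF f n k v := by
  rintro ⟨-, hstable⟩
  obtain ⟨y, hyv, hyv', hyfv⟩ := exists_agree_lt_and_ne_ne v v (f v) n
  obtain ⟨t, ht⟩ := hstable (n + 2) (by omega) v y ⟨0, fun _ _ => rfl⟩ ⟨0, hyv⟩
  rcases hf.iterate_eq_or t v with h | h <;> rw [h] at ht
  · exact hyv' fun i hi => (ht i hi).symm
  · exact hyfv fun i hi => (ht i hi).symm

lemma not_settledF_of_involutive (hf : Involutive f) : ¬ SettledF f := by
  have hempty (n : ℕ) : IsEmpty {w : Fin n → Fin 2 // StableVertexF f n w} :=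
    ⟨fun ⟨_, v, _, k, hk⟩ => not_inStableCycleF_of_involutive hf n k v hk⟩
  intro h
  simp only [SettledF, Nat.card_of_isEmpty, Nat.cast_zero, zero_div] at h
  exact zero_ne_one (tendsto_const_nhds_iff.1 h)

end Binary

/-- Let `T` be the binary rooted tree and let
`G = ⟨a, b | b² = 1, b a b = a⁻¹⟩` be the infinite dihedral group realized in
`Aut(T)` with `a` minimal. Then every element of the closure of `G` in
`Aut(T)` that is not in the closure of `⟨a⟩` has order `2`; consequently the
settled elements are not dense in the closure of `G`. -/
theorem settled_stmt19 (a b : Equiv.Perm (Bd (fun _ => 2)))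
    (ha : a ∈ treeAutGroup (fun _ => 2)) (hb : b ∈ treeAutGroup (fun _ => 2))
    (hamin : LevelTransitive a) (hb2 : b ^ 2 = 1) (hrel : b * a * b = a⁻¹) :
    -- every element of the closure of `G` outside the closure of `⟨a⟩` has order 2 …
    (∀ f : Bd (fun _ => 2) → Bd (fun _ => 2),
      InClosure ((Subgroup.closure {a, b} : Subgroup (Equiv.Perm (Bd (fun _ => 2)))) :
        Set (Equiv.Perm (Bd (fun _ => 2)))) f →
      ¬ InClosure ((Subgroup.zpowers a : Subgroup (Equiv.Perm (Bd (fun _ => 2)))) :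
        Set (Equiv.Perm (Bd (fun _ => 2)))) f →
      f ∘ f = id ∧ f ≠ id) ∧
    -- … and hence the settled elements are not dense in the closure of `G`.
    ¬ (∀ g : Bd (fun _ => 2) → Bd (fun _ => 2),
        InClosure ((Subgroup.closure {a, b} : Subgroup (Equiv.Perm (Bd (fun _ => 2)))) :
          Set (Equiv.Perm (Bd (fun _ => 2)))) g →
        ∀ n : ℕ, ∃ s : Bd (fun _ => 2) → Bd (fun _ => 2),
          InClosure ((Subgroup.closure {a, b} : Subgroup (Equiv.Perm (Bd (fun _ => 2)))) :
            Set (Equiv.Perm (Bd (fun _ => 2)))) s ∧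
          SettledF s ∧ ∀ x : Bd (fun _ => 2), ∀ i < n, s x i = g x i) := by
  refine ⟨fun f hfG hfa =>
    ⟨(involutive_of_inClosure_of_not_inClosure ha hb hb2 hrel hfG hfa).comp_self,
      fun hf => hfa fun _ => ⟨1, Subgroup.one_mem _, fun _ _ _ => by rw [hf]; rfl⟩⟩,
    fun hdense => ?_⟩
  obtain ⟨s, hsG, hs, hsb⟩ :=
    hdense b (fun _ => ⟨b, Subgroup.subset_closure (by simp), fun _ _ _ => rfl⟩) 2
  have hsa : ¬ InClosure (Subgroup.zpowers a : Set (Equiv.Perm (Bd (fun _ => 2)))) s := by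
    intro hsa
    obtain ⟨g, ⟨k, rfl⟩, hsg⟩ := hsa 2
    exact not_agree_zpow_of_dihedral ha hb hamin hb2 hrel k
      fun x i hi => (hsb x i hi).symm.trans (hsg x i hi)
  exact not_settledF_of_involutive
    (involutive_of_inClosure_of_not_inClosure ha hb hb2 hrel hsG hsa) hs
end
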